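/- Let v be a stem in a forest T, let R be the set of leaf neighbors of v, and let r = |R| ≥ 1. Then s̊(T) ≤ s̊(T − R) + r + u_r. -/

import Mathlib

/-!
Painter keeps the invariant `s̊(S) ≤ s̊(S - R) + |S ∩ R| + [v ∈ S] u_{|S ∩ R|}` on the uncoloured
set `S`. Against a marked set `M` she answers `M - R` as in an optimal play on `S - R` and adds the
marked leaves `A = M ∩ R`, whose only neighbour is `v`. If `v` is marked and losing `A` lowers
`u`, that drop pays for the mark on `v`, so `v` is dropped from the marks she answers. If her
answer colours `v`, she leaves `A` uncoloured: `u` did not drop, so `|A| ≤ u`, and these marks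
are paid by the `u`-term, which disappears with `v`.
-/

variable {V : Type} [Fintype V] [DecidableEq V]

/-- The `k`-th triangular number `t_k = C(k+1,2)`. -/
def tri (k : ℕ) : ℕ := (k + 1).choose 2

/-- A natural number is triangular if it equals `t_k` for some `k`. -/
def IsTriangular (m : ℕ) : Prop := ∃ k, m = tri k

/-- `uval r = max {k : t_k ≤ r}`. -/
def uval (r : ℕ) : ℕ := Nat.findGreatest (fun k => tri k ≤ r) r

open Classical in
/-- Sum-color cost (optimal total score of the slow-coloring game) of the subgraph
of `G` induced by `S`: it is `0` when there are no vertices, and otherwise the maximum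
over nonempty marked sets `M ⊆ S` of `|M|` plus the minimum over nonempty independent
subsets `I ⊆ M` of the sum-color cost of the graph with `I` deleted. -/
noncomputable def scost (G : SimpleGraph V) (S : Finset V) : ℕ :=
  if S = ∅ then 0
  else
    (S.powerset.erase ∅).attach.sup fun M =>
      M.1.card +
      WithBot.unbotD 0
        ((((M.1.powerset.erase ∅).filter
              fun I => ∀ x ∈ I, ∀ y ∈ I, ¬ G.Adj x y).attach.image
            fun I => scost G (S \ I.1)).min)
termination_by S.card
decreasing_by
  · have hI := I.2
    have hM := M.2
    simp only [Finset.mem_filter, Finset.mem_erase, Finset.mem_powerset] at hI hM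
    have hsub : I.1 ⊆ S := hI.1.2.trans hM.2
    have hne : I.1.Nonempty := Finset.nonempty_iff_ne_empty.mpr hI.1.1
    exact Finset.card_lt_card (Finset.sdiff_ssubset hsub hne)

/-- A vertex is a leaf if it has exactly one neighbor. -/
def IsLeaf (G : SimpleGraph V) (v : V) : Prop := (G.neighborSet v).ncard = 1

/-- A stem in a forest: a vertex with at least one leaf neighbor and at most one
non-leaf neighbor. -/
def IsStem (G : SimpleGraph V) (v : V) : Prop :=
  (∃ w, G.Adj v w ∧ IsLeaf G w) ∧ {w | G.Adj v w ∧ ¬ IsLeaf G w}.ncard ≤ 1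

open Finset

lemma tri_succ (k : ℕ) : tri (k + 1) = tri k + (k + 1) := by
  rw [tri, tri, Nat.choose_succ_succ', Nat.choose_one_right, add_comm]

lemma le_tri (k : ℕ) : k ≤ tri k := by
  induction k with
  | zero => exact Nat.zero_le _
  | succ k ih => rw [tri_succ]; omega

lemma tri_mono {i j : ℕ} (h : i ≤ j) : tri i ≤ tri j :=
  Nat.choose_le_choose 2 (by omega)

lemma tri_uval_le (r : ℕ) : tri (uval r) ≤ r :=
  Nat.findGreatest_spec (P := fun k => tri k ≤ r) (Nat.zero_le r) (by simp [tri])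

lemma lt_tri_uval_succ (r : ℕ) : r < tri (uval r + 1) := by
  by_contra! h
  exact Nat.findGreatest_is_greatest (P := fun k => tri k ≤ r) (Nat.lt_succ_self _)
    ((le_tri _).trans h) h

lemma uval_mono {r s : ℕ} (h : r ≤ s) : uval r ≤ uval s :=
  Nat.findGreatest_mono (fun _ hk => hk.trans h) h

lemma le_uval_of_uval_le_uval_sub {a r : ℕ} (har : a ≤ r) (h : uval r ≤ uval (r - a)) :
    a ≤ uval r := by
  have hlt := lt_tri_uval_succ r
  have hle := (tri_mono h).trans (tri_uval_le (r - a))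
  rw [tri_succ] at hlt
  omega

omit [Fintype V] [DecidableEq V] in
lemma isIndepSet_coe_iff {G : SimpleGraph V} {I : Finset V} :
    G.IsIndepSet (I : Set V) ↔ ∀ x ∈ I, ∀ y ∈ I, ¬ G.Adj x y :=
  ⟨fun h _ hx _ hy hxy => h hx hy hxy.ne hxy, fun h _ hx _ hy _ => h _ hx _ hy⟩

section Game

variable {G : SimpleGraph V}

lemma scost_le_of_forall_exists {S : Finset V} {B : ℕ}
    (h : ∀ M ⊆ S, M.Nonempty →
      ∃ I ⊆ M, I.Nonempty ∧ G.IsIndepSet (I : Set V) ∧ #M + scost G (S \ I) ≤ B) :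
    scost G S ≤ B := by
  classical
  rcases S.eq_empty_or_nonempty with rfl | hS
  · rw [scost, if_pos rfl]; exact Nat.zero_le B
  rw [scost, if_neg hS.ne_empty]
  refine Finset.sup_le fun ⟨M, hM⟩ _ => ?_
  rw [mem_erase, mem_powerset] at hM
  obtain ⟨I, hIM, hIne, hI, hle⟩ := h M hM.2 (nonempty_iff_ne_empty.mpr hM.1)
  have hImem : I ∈ (M.powerset.erase ∅).filter fun I => ∀ x ∈ I, ∀ y ∈ I, ¬ G.Adj x y := by
    rw [mem_filter, mem_erase, mem_powerset, ← isIndepSet_coe_iff]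
    exact ⟨⟨hIne.ne_empty, hIM⟩, hI⟩
  refine le_trans (Nat.add_le_add_left ?_ _) hle
  have hmem := mem_image_of_mem (fun I => scost G (S \ I.1)) (mem_attach _ ⟨I, hImem⟩)
  rw [← coe_min' ⟨_, hmem⟩]
  exact min'_le _ _ hmem

lemma exists_indepSet_add_scost_sdiff_le {S M : Finset V} (hMS : M ⊆ S) :
    ∃ I ⊆ M, (M.Nonempty → I.Nonempty) ∧ G.IsIndepSet (I : Set V) ∧
      #M + scost G (S \ I) ≤ scost G S := by
  classical
  rcases M.eq_empty_or_nonempty with rfl | hM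
  · exact ⟨∅, empty_subset _, id, by simp, by simp⟩
  set cands := (M.powerset.erase ∅).filter fun I => ∀ x ∈ I, ∀ y ∈ I, ¬ G.Adj x y
  obtain ⟨x, hx⟩ := hM
  have hxS : S ≠ ∅ := ne_empty_of_mem (hMS hx)
  have hMmem : M ∈ S.powerset.erase ∅ := by
    rw [mem_erase, mem_powerset]; exact ⟨ne_empty_of_mem hx, hMS⟩
  have hx : {x} ∈ cands := by
    simp [cands, hx]
  set img := cands.attach.image fun I => scost G (S \ I.1)
  have himg : img.Nonempty := ⟨_, mem_image_of_mem _ (mem_attach _ ⟨_, hx⟩)⟩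
  obtain ⟨⟨I, hI⟩, -, hIeq⟩ := mem_image.mp (min'_mem img himg)
  rw [mem_filter, mem_erase, mem_powerset, ← isIndepSet_coe_iff] at hI
  refine ⟨I, hI.1.2, fun _ => nonempty_iff_ne_empty.mpr hI.1.1, hI.2, ?_⟩
  conv_rhs => rw [scost, if_neg hxS]
  refine le_sup_of_le (mem_attach _ ⟨M, hMmem⟩) (le_of_eq ?_)
  change _ = #M + WithBot.unbotD 0 img.min
  rw [← coe_min' himg, ← hIeq]
  rfl

end Game

section Stem

variable {G : SimpleGraph V} {v : V} {R : Finset V}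

noncomputable def stemBound (G : SimpleGraph V) (v : V) (R S : Finset V) : ℕ :=
  scost G (S \ R) + #(S ∩ R) + if v ∈ S then uval #(S ∩ R) else 0

lemma stemBound_sdiff_union (hvR : v ∉ R) {S I A : Finset V} (hI : Disjoint I R) (hA : A ⊆ R) :
    stemBound G v R (S \ (I ∪ A)) =
      scost G ((S \ R) \ I) + #((S ∩ R) \ A) + if v ∈ S \ I then uval #((S ∩ R) \ A) else 0 := by
  have hdiff : (S \ (I ∪ A)) \ R = (S \ R) \ I := by
    ext x
    have := @hA x
    simp only [mem_sdiff, mem_union]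
    tauto
  have hinter : (S \ (I ∪ A)) ∩ R = (S ∩ R) \ A := by
    ext x
    have : x ∈ I → x ∉ R := fun h => disjoint_left.mp hI h
    simp only [mem_sdiff, mem_inter, mem_union]
    tauto
  have hv : v ∈ S \ (I ∪ A) ↔ v ∈ S \ I := by
    have := mt (@hA v) hvR
    simp only [mem_sdiff, mem_union]
    tauto
  rw [stemBound, hdiff, hinter, if_congr hv rfl rfl]

omit [Fintype V] in
lemma isIndepSet_union_of_adj_iff (hR : ∀ w ∈ R, ∀ x, G.Adj w x ↔ x = v) {I A : Finset V}
    (hI : G.IsIndepSet (I : Set V)) (hvI : v ∉ I) (hA : A ⊆ R) :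
    G.IsIndepSet ((I ∪ A : Finset V) : Set V) := by
  have hvA : v ∉ A := fun h => G.irrefl ((hR v (hA h) v).mpr rfl)
  have hadj : ∀ w ∈ A, ∀ x, G.Adj w x → x ∉ I ∪ A := by
    intro w hw x hwx
    rw [(hR w (hA hw) x).mp hwx, mem_union]
    tauto
  intro x hx y hy hxy hadjxy
  rw [coe_union, Set.mem_union, mem_coe, mem_coe] at hx hy
  rcases hx with hx | hx
  · rcases hy with hy | hy
    · exact hI hx hy hxy hadjxy
    · exact hadj y hy x hadjxy.symm (mem_union_left _ hx)
  · exact hadj x hx y hadjxy (by rw [mem_union]; exact hy)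

lemma exists_indepSet_add_stemBound_sdiff_le (hR : ∀ w ∈ R, ∀ x, G.Adj w x ↔ x = v)
    {S M : Finset V} (hMS : M ⊆ S) (hM : M.Nonempty) :
    ∃ I ⊆ M, I.Nonempty ∧ G.IsIndepSet (I : Set V) ∧
      #M + stemBound G v R (S \ I) ≤ stemBound G v R S := by
  have hvR : v ∉ R := fun h => G.irrefl ((hR v h v).mpr rfl)
  set A := M ∩ R
  have hAR : A ⊆ R := inter_subset_right
  have hAS : A ⊆ S ∩ R := inter_subset_inter_right hMS
  have hMA : #(M \ R) + #A = #M := card_sdiff_add_card_inter M R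
  have hMR : M \ R ⊆ S \ R := sdiff_subset_sdiff hMS le_rfl
  have hkA : #((S ∩ R) \ A) = #(S ∩ R) - #A := card_sdiff_of_subset hAS
  have hAk : #A ≤ #(S ∩ R) := card_le_card hAS
  have hmono : uval (#(S ∩ R) - #A) ≤ uval #(S ∩ R) := uval_mono (Nat.sub_le _ _)
  have hdisj : ∀ {I}, I ⊆ M \ R → Disjoint I R := fun h => sdiff_disjoint.mono_left h
  by_cases hdrop : v ∈ M ∧ uval (#(S ∩ R) - #A) < uval #(S ∩ R)
  · -- the drop of `u` pays for the mark on `v`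
    obtain ⟨I, hIM, -, hI, hle⟩ := exists_indepSet_add_scost_sdiff_le (G := G) ((erase_subset v _).trans hMR)
    have hvI : v ∉ I := fun h => notMem_erase v _ (hIM h)
    have hIMR : I ⊆ M \ R := hIM.trans (erase_subset _ _)
    have hA : A.Nonempty := by
      rw [← card_pos, Nat.pos_iff_ne_zero]
      intro h
      simp [h] at hdrop
    have hvMR : v ∈ M \ R := mem_sdiff.mpr ⟨hdrop.1, hvR⟩
    refine ⟨I ∪ A, union_subset (hIMR.trans sdiff_subset) inter_subset_left,
      hA.mono subset_union_right, isIndepSet_union_of_adj_iff hR hI hvI hAR, ?_⟩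
    rw [stemBound_sdiff_union hvR (hdisj hIMR) hAR, stemBound, hkA, if_pos (hMS hdrop.1)]
    rw [card_erase_of_mem hvMR] at hle
    have := card_pos.mpr ⟨v, hvMR⟩
    split_ifs <;> omega
  obtain ⟨I, hIM, hIne, hI, hle⟩ := exists_indepSet_add_scost_sdiff_le (G := G) hMR
  by_cases hvI : v ∈ I
  · -- `v` is coloured; the at most `u` marked leaves stay uncoloured
    have hvM : v ∈ M := (mem_sdiff.mp (hIM hvI)).1
    have hAu : #A ≤ uval #(S ∩ R) := le_uval_of_uval_le_uval_sub hAk (not_lt.mp (hdrop ⟨hvM, ·⟩))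
    refine ⟨I, hIM.trans sdiff_subset, ⟨v, hvI⟩, hI, ?_⟩
    have h := stemBound_sdiff_union (G := G) (S := S) hvR (hdisj hIM) (empty_subset R)
    rw [union_empty, sdiff_empty, if_neg (fun h => (mem_sdiff.mp h).2 hvI)] at h
    rw [h, stemBound, if_pos (hMS hvM)]
    omega
  · have hIA : (I ∪ A).Nonempty := by
      obtain ⟨x, hx⟩ := hM
      by_cases hxR : x ∈ R
      · exact ⟨x, mem_union_right _ (mem_inter.mpr ⟨hx, hxR⟩)⟩
      · exact (hIne ⟨x, mem_sdiff.mpr ⟨hx, hxR⟩⟩).mono subset_union_left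
    refine ⟨I ∪ A, union_subset (hIM.trans sdiff_subset) inter_subset_left, hIA,
      isIndepSet_union_of_adj_iff hR hI hvI hAR, ?_⟩
    rw [stemBound_sdiff_union hvR (hdisj hIM) hAR, stemBound, hkA]
    by_cases hvS : v ∈ S
    · rw [if_pos (mem_sdiff.mpr ⟨hvS, hvI⟩), if_pos hvS]
      omega
    · rw [if_neg (fun h => hvS (mem_sdiff.mp h).1), if_neg hvS]
      omega

lemma scost_le_stemBound (hR : ∀ w ∈ R, ∀ x, G.Adj w x ↔ x = v) (S : Finset V) :
    scost G S ≤ stemBound G v R S := by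
  induction S using Finset.strongInduction with
  | H S ih =>
    refine scost_le_of_forall_exists fun M hMS hM => ?_
    obtain ⟨I, hIM, hI, hind, hle⟩ := exists_indepSet_add_stemBound_sdiff_le hR hMS hM
    have hIH := ih _ (sdiff_ssubset (hIM.trans hMS) hI)
    exact ⟨I, hIM, hI, hind, le_trans (by gcongr) hle⟩

end Stem

omit [Fintype V] [DecidableEq V] in
lemma IsLeaf.adj_iff {G : SimpleGraph V} {v w : V} (hw : IsLeaf G w) (hvw : G.Adj v w) (x : V) :
    G.Adj w x ↔ x = v := by
  obtain ⟨y, hy⟩ := Set.ncard_eq_one.mp hw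
  have hv : v ∈ G.neighborSet w := hvw.symm
  rw [hy, Set.mem_singleton_iff] at hv
  rw [← SimpleGraph.mem_neighborSet, hy, Set.mem_singleton_iff, hv]

theorem stmt8_general (G : SimpleGraph V) (v : V) (R : Finset V)
    (hR : ∀ w, w ∈ R ↔ (G.Adj v w ∧ IsLeaf G w)) :
    scost G Finset.univ ≤ scost G (Finset.univ \ R) + R.card + uval R.card := by
  have h := scost_le_stemBound (S := Finset.univ)
    fun w hw => ((hR w).mp hw).2.adj_iff ((hR w).mp hw).1
  rwa [stemBound, univ_inter, if_pos (mem_univ v)] at h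

/-- If `v` is a stem in a forest `T` with `r ≥ 1` leaf neighbors (forming the set `R`),
then `s̊(T) ≤ s̊(T - R) + r + u_r`. -/
theorem stmt8 (G : SimpleGraph V) (hG : G.IsAcyclic) (v : V) (R : Finset V)
    (hv : IsStem G v) (hR : ∀ w, w ∈ R ↔ (G.Adj v w ∧ IsLeaf G w)) (hr : 1 ≤ R.card) :
    scost G Finset.univ ≤ scost G (Finset.univ \ R) + R.card + uval R.card :=
  stmt8_general G v R hR
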